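/- Multiplication of trees (sets of trees) is associative: (r × s) × t = r × (s × t) for all nonempty finite sets of nontrivial planar binary trees r, s, t. -/

import Mathlib

/-- Planar binary rooted trees: either the trivial tree `leaf` (drawn `|`)
or the grafting `node l r = l ∨ r` of two trees. -/
inductive PBT : Type
  | leaf : PBT
  | node : PBT → PBT → PBT
deriving DecidableEq

namespace PBT

/-- Number of internal vertices of a tree. -/
def size : PBT → ℕ
  | leaf => 0
  | node l r => l.size + r.size + 1

/-- The dendriform sum of two trees, a set of trees:
`s + t = (s ⊣ t) ∪ (s ⊢ t)` with `s ⊣ t = sˡ ∨ (sʳ + t)`, `s ⊢ t = (s + tˡ) ∨ tʳ`,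
and the trivial tree acting as neutral element. -/
def addT : PBT → PBT → Set PBT
  | leaf, t => {t}
  | node l r, leaf => {node l r}
  | node l r, node l' r' =>
      (fun x => node l x) '' addT r (node l' r') ∪
      (fun x => node x r') '' addT (node l r) l'
termination_by s t => s.size + t.size
decreasing_by all_goals (simp [size] <;> omega)

/-- The left operation `s ⊣ t := sˡ ∨ (sʳ + t)` on trees (with `s ⊣ | = s`),
valued in sets of trees. -/
def leftT : PBT → PBT → Set PBT
  | leaf, _ => ∅
  | node l r, leaf => {node l r}
  | node l r, node l' r' => (fun x => node l x) '' addT r (node l' r')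

/-- The right operation `s ⊢ t := (s + tˡ) ∨ tʳ` on trees (with `| ⊢ t = t`),
valued in sets of trees. -/
def rightT : PBT → PBT → Set PBT
  | _, leaf => ∅
  | leaf, t => {t}
  | node l r, node l' r' => (fun x => node x r') '' addT (node l r) l'

/-- Elementwise extension of `⊣` to sets of trees. -/
def leftS (S T : Set PBT) : Set PBT := ⋃ s ∈ S, ⋃ t ∈ T, leftT s t

/-- Elementwise extension of `⊢` to sets of trees. -/
def rightS (S T : Set PBT) : Set PBT := ⋃ s ∈ S, ⋃ t ∈ T, rightT s t

/-- Elementwise extension of the sum `+` to sets of trees: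
`S + T = (S ⊣ T) ∪ (S ⊢ T)`. -/
def addS (S T : Set PBT) : Set PBT := ⋃ s ∈ S, ⋃ t ∈ T, addT s t

/-- A nonempty finite set of nontrivial trees. -/
def Good (S : Set PBT) : Prop := S.Nonempty ∧ S.Finite ∧ ∀ t ∈ S, t ≠ leaf

end PBT

namespace PBT

/-- Multiplication of a tree by a set of trees, by substitution: write
`t = tˡ ∨ tʳ` as `tˡ ⊢ 1 ⊣ tʳ` (where `1` is the one-vertex tree) and replace
each occurrence of `1` by `S`, so `t × S = (tˡ × S) ⊢ S ⊣ (tʳ × S)`. -/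
def mulT : PBT → Set PBT → Set PBT
  | leaf, _ => {leaf}
  | node l r, S => rightS (mulT l S) (leftS S (mulT r S))

/-- Elementwise extension of the multiplication to sets of trees. -/
def mulS (T S : Set PBT) : Set PBT := ⋃ t ∈ T, mulT t S

end PBT
namespace PBT

@[simp] lemma addT_leaf_left (t : PBT) : addT leaf t = {t} := by rw [addT]
@[simp] lemma addT_leaf_right (t : PBT) : addT t leaf = {t} := by cases t <;> rw [addT]
lemma addT_node (l r l' r' : PBT) : addT (node l r) (node l' r') =
    (fun x => node l x) '' addT r (node l' r') ∪
    (fun x => node x r') '' addT (node l r) l' := by rw [addT]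

@[simp] lemma leftT_leaf_left (y : PBT) : leftT leaf y = ∅ := rfl
@[simp] lemma leftT_node_leaf (l r : PBT) : leftT (node l r) leaf = {node l r} := rfl
lemma leftT_node_node (l r l' r' : PBT) : leftT (node l r) (node l' r') =
    (fun x => node l x) '' addT r (node l' r') := rfl
@[simp] lemma rightT_leaf_right (x : PBT) : rightT x leaf = ∅ := by cases x <;> rfl
@[simp] lemma rightT_leaf_node (l' r' : PBT) : rightT leaf (node l' r') = {node l' r'} := rfl
lemma rightT_node_node (l r l' r' : PBT) : rightT (node l r) (node l' r') =
    (fun x => node x r') '' addT (node l r) l' := rfl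

lemma leftT_leaf_right_of_ne {w : PBT} (h : w ≠ leaf) : leftT w leaf = {w} := by
  cases w with
  | leaf => exact absurd rfl h
  | node a b => rfl

lemma rightT_leaf_left_of_ne {w : PBT} (h : w ≠ leaf) : rightT leaf w = {w} := by
  cases w with
  | leaf => exact absurd rfl h
  | node a b => rfl

lemma mem_leftT_ne_leaf {x y u : PBT} (h : u ∈ leftT x y) : u ≠ leaf := by
  cases x with
  | leaf => simp at h
  | node a b =>
    cases y with
    | leaf => simp at h; subst h; simp
    | node c d =>
      rw [leftT_node_node] at h
      obtain ⟨v, -, rfl⟩ := h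
      simp

lemma mem_rightT_ne_leaf {x y u : PBT} (h : u ∈ rightT x y) : u ≠ leaf := by
  cases y with
  | leaf => simp at h
  | node c d =>
    cases x with
    | leaf => simp at h; subst h; simp
    | node a b =>
      rw [rightT_node_node] at h
      obtain ⟨v, -, rfl⟩ := h
      simp

lemma mem_addT_ne_leaf {x y u : PBT} (h : u ∈ addT x y) (hxy : x ≠ leaf ∨ y ≠ leaf) :
    u ≠ leaf := by
  cases x with
  | leaf =>
    cases y with
    | leaf => simp at hxy
    | node c d => simp at h; subst h; simp
  | node a b =>
    cases y with
    | leaf => simp at h; subst h; simp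
    | node c d =>
      rw [addT_node] at h
      rcases h with ⟨v, -, rfl⟩ | ⟨v, -, rfl⟩ <;> simp

lemma addT_eq_union {x y : PBT} (h : x ≠ leaf ∨ y ≠ leaf) :
    addT x y = leftT x y ∪ rightT x y := by
  cases x with
  | leaf =>
    cases y with
    | leaf => simp at h
    | node c d => simp
  | node a b =>
    cases y with
    | leaf => simp
    | node c d => rw [addT_node, leftT_node_node, rightT_node_node]

lemma biUnion_leftT_leaf {A : Set PBT} (h : ∀ w ∈ A, w ≠ leaf) :
    ⋃ w ∈ A, leftT w leaf = A := by
  calc ⋃ w ∈ A, leftT w leaf = ⋃ w ∈ A, ({w} : Set PBT) :=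
        Set.iUnion₂_congr fun w hw => leftT_leaf_right_of_ne (h w hw)
    _ = A := Set.biUnion_of_singleton A

lemma biUnion_rightT_leaf {A : Set PBT} (h : ∀ w ∈ A, w ≠ leaf) :
    ⋃ w ∈ A, rightT leaf w = A := by
  calc ⋃ w ∈ A, rightT leaf w = ⋃ w ∈ A, ({w} : Set PBT) :=
        Set.iUnion₂_congr fun w hw => rightT_leaf_left_of_ne (h w hw)
    _ = A := Set.biUnion_of_singleton A


/-- The four dendriform identities for trees, proved simultaneously by strong
induction on the total size. -/
lemma dendriform : ∀ n : ℕ, ∀ x y z : PBT, x.size + y.size + z.size ≤ n →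
    ((⋃ w ∈ leftT x y, leftT w z) = ⋃ w ∈ addT y z, leftT x w) ∧
    ((⋃ w ∈ rightT x y, leftT w z) = ⋃ w ∈ leftT y z, rightT x w) ∧
    ((⋃ w ∈ addT x y, rightT w z) = ⋃ w ∈ rightT y z, rightT x w) ∧
    ((⋃ w ∈ addT x y, addT w z) = ⋃ w ∈ addT y z, addT x w) := by
  intro n
  induction n using Nat.strong_induction_on with
  | _ n ih =>
  intro x y z hn
  -- the associativity of `addT` at strictly smaller total size
  have H0 : ∀ x' y' z' : PBT, x'.size + y'.size + z'.size < n →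
      (⋃ w ∈ addT x' y', addT w z') = ⋃ w ∈ addT y' z', addT x' w := by
    intro x' y' z' h
    exact (ih _ h x' y' z' le_rfl).2.2.2
  have hA : (⋃ w ∈ leftT x y, leftT w z) = ⋃ w ∈ addT y z, leftT x w := by
    cases x with
    | leaf => simp
    | node a b =>
      cases y with
      | leaf => simp [Set.biUnion_singleton]
      | node c d =>
        cases z with
        | leaf =>
          rw [addT_leaf_right, Set.biUnion_singleton,
            biUnion_leftT_leaf fun w hw => mem_leftT_ne_leaf hw]
        | node e f =>
          have hsz : b.size + (node c d).size + (node e f).size < n := by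
            simp [size] at hn ⊢; omega
          calc ⋃ w ∈ leftT (node a b) (node c d), leftT w (node e f)
              = ⋃ u ∈ addT b (node c d), leftT (node a u) (node e f) := by
                rw [leftT_node_node, Set.biUnion_image]
            _ = ⋃ u ∈ addT b (node c d), (fun v => node a v) '' addT u (node e f) := by
                exact Set.iUnion₂_congr fun u hu => rfl
            _ = (fun v => node a v) '' ⋃ u ∈ addT b (node c d), addT u (node e f) := by
                rw [Set.image_iUnion₂]
            _ = (fun v => node a v) '' ⋃ w ∈ addT (node c d) (node e f), addT b w := by
                rw [H0 _ _ _ hsz]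
            _ = ⋃ w ∈ addT (node c d) (node e f), (fun v => node a v) '' addT b w := by
                rw [Set.image_iUnion₂]
            _ = ⋃ w ∈ addT (node c d) (node e f), leftT (node a b) w := by
                refine Set.iUnion₂_congr fun w hw => ?_
                have hw' : w ≠ leaf := mem_addT_ne_leaf hw (Or.inl (by simp))
                cases w with
                | leaf => exact absurd rfl hw'
                | node w1 w2 => rw [leftT_node_node]
  have hB : (⋃ w ∈ rightT x y, leftT w z) = ⋃ w ∈ leftT y z, rightT x w := by
    cases y with
    | leaf => simp
    | node c d =>
      cases x with
      | leaf =>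
        rw [rightT_leaf_node, Set.biUnion_singleton,
          biUnion_rightT_leaf fun w hw => mem_leftT_ne_leaf hw]
      | node a b =>
        cases z with
        | leaf =>
          rw [leftT_node_leaf, Set.biUnion_singleton,
            biUnion_leftT_leaf fun w hw => mem_rightT_ne_leaf hw]
        | node e f =>
          rw [rightT_node_node, leftT_node_node, Set.biUnion_image, Set.biUnion_image]
          ext g
          simp only [Set.mem_iUnion, exists_prop]
          constructor
          · rintro ⟨u, hu, hg⟩
            rw [show leftT (node u d) (node e f) =
                (fun v => node u v) '' addT d (node e f) from rfl] at hg
            obtain ⟨v, hv, rfl⟩ := hg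
            exact ⟨v, hv, by
              rw [show rightT (node a b) (node c v) =
                (fun w => node w v) '' addT (node a b) c from rfl]
              exact ⟨u, hu, rfl⟩⟩
          · rintro ⟨v, hv, hg⟩
            rw [show rightT (node a b) (node c v) =
                (fun w => node w v) '' addT (node a b) c from rfl] at hg
            obtain ⟨u, hu, rfl⟩ := hg
            exact ⟨u, hu, by
              rw [show leftT (node u d) (node e f) =
                (fun w => node u w) '' addT d (node e f) from rfl]
              exact ⟨v, hv, rfl⟩⟩
  have hC : (⋃ w ∈ addT x y, rightT w z) = ⋃ w ∈ rightT y z, rightT x w := by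
    cases z with
    | leaf => simp
    | node e f =>
      cases y with
      | leaf => simp [Set.biUnion_singleton]
      | node c d =>
        cases x with
        | leaf =>
          rw [addT_leaf_left, Set.biUnion_singleton,
            biUnion_rightT_leaf fun w hw => mem_rightT_ne_leaf hw]
        | node a b =>
          have hsz : (node a b).size + (node c d).size + e.size < n := by
            simp [size] at hn ⊢; omega
          calc ⋃ w ∈ addT (node a b) (node c d), rightT w (node e f)
              = ⋃ w ∈ addT (node a b) (node c d), (fun v => node v f) '' addT w e := by
                refine Set.iUnion₂_congr fun w hw => ?_
                have hw' : w ≠ leaf := mem_addT_ne_leaf hw (Or.inl (by simp))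
                cases w with
                | leaf => exact absurd rfl hw'
                | node w1 w2 => rw [rightT_node_node]
            _ = (fun v => node v f) '' ⋃ w ∈ addT (node a b) (node c d), addT w e := by
                rw [Set.image_iUnion₂]
            _ = (fun v => node v f) '' ⋃ u ∈ addT (node c d) e, addT (node a b) u := by
                rw [H0 _ _ _ hsz]
            _ = ⋃ u ∈ addT (node c d) e, (fun v => node v f) '' addT (node a b) u := by
                rw [Set.image_iUnion₂]
            _ = ⋃ u ∈ addT (node c d) e, rightT (node a b) (node u f) := by
                exact Set.iUnion₂_congr fun u hu => rfl
            _ = ⋃ w ∈ rightT (node c d) (node e f), rightT (node a b) w := by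
                rw [rightT_node_node, Set.biUnion_image]
  refine ⟨hA, hB, hC, ?_⟩
  cases x with
  | leaf => simp [Set.biUnion_singleton, Set.biUnion_of_singleton]
  | node a b =>
    cases y with
    | leaf => simp [Set.biUnion_singleton]
    | node c d =>
      have hx : (node a b : PBT) ≠ leaf := by simp
      have hy : (node c d : PBT) ≠ leaf := by simp
      calc ⋃ w ∈ addT (node a b) (node c d), addT w z
          = ⋃ w ∈ addT (node a b) (node c d), (leftT w z ∪ rightT w z) := by
            refine Set.iUnion₂_congr fun w hw => ?_
            exact addT_eq_union (Or.inl (mem_addT_ne_leaf hw (Or.inl hx)))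
        _ = (⋃ w ∈ addT (node a b) (node c d), leftT w z) ∪
            ⋃ w ∈ addT (node a b) (node c d), rightT w z := by
            simp [Set.iUnion_union_distrib]
        _ = ((⋃ w ∈ leftT (node a b) (node c d), leftT w z) ∪
              ⋃ w ∈ rightT (node a b) (node c d), leftT w z) ∪
            ⋃ w ∈ rightT (node c d) z, rightT (node a b) w := by
            rw [hC, addT_eq_union (Or.inl hx), Set.biUnion_union]
        _ = (⋃ w ∈ addT (node c d) z, leftT (node a b) w) ∪
            ((⋃ w ∈ leftT (node c d) z, rightT (node a b) w) ∪
              ⋃ w ∈ rightT (node c d) z, rightT (node a b) w) := by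
            rw [hA, hB, Set.union_assoc]
        _ = (⋃ w ∈ addT (node c d) z, leftT (node a b) w) ∪
            ⋃ w ∈ addT (node c d) z, rightT (node a b) w := by
            rw [addT_eq_union (Or.inl hy), Set.biUnion_union, Set.biUnion_union]
        _ = ⋃ w ∈ addT (node c d) z, addT (node a b) w := by
            rw [← Set.iUnion_union_distrib]
            refine Set.iUnion_congr fun w => ?_
            rw [← Set.iUnion_union_distrib]
            exact Set.iUnion_congr fun hw => (addT_eq_union (Or.inl hx)).symm


lemma T1 (x y z : PBT) : (⋃ w ∈ leftT x y, leftT w z) = ⋃ w ∈ addT y z, leftT x w :=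
  (dendriform _ x y z le_rfl).1
lemma T2 (x y z : PBT) : (⋃ w ∈ rightT x y, leftT w z) = ⋃ w ∈ leftT y z, rightT x w :=
  (dendriform _ x y z le_rfl).2.1
lemma T3 (x y z : PBT) : (⋃ w ∈ addT x y, rightT w z) = ⋃ w ∈ rightT y z, rightT x w :=
  (dendriform _ x y z le_rfl).2.2.1

lemma mem_leftS {u : PBT} {X Y : Set PBT} :
    u ∈ leftS X Y ↔ ∃ x ∈ X, ∃ y ∈ Y, u ∈ leftT x y := by
  simp [leftS]
lemma mem_rightS {u : PBT} {X Y : Set PBT} :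
    u ∈ rightS X Y ↔ ∃ x ∈ X, ∃ y ∈ Y, u ∈ rightT x y := by
  simp [rightS]
lemma mem_addS {u : PBT} {X Y : Set PBT} :
    u ∈ addS X Y ↔ ∃ x ∈ X, ∃ y ∈ Y, u ∈ addT x y := by
  simp [addS]
lemma mem_mulS {u : PBT} {X S : Set PBT} :
    u ∈ mulS X S ↔ ∃ x ∈ X, u ∈ mulT x S := by
  simp [mulS]

lemma T1m (x y z u : PBT) :
    (∃ w ∈ leftT x y, u ∈ leftT w z) ↔ ∃ w ∈ addT y z, u ∈ leftT x w := by
  have := Set.ext_iff.mp (T1 x y z) u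
  simpa using this
lemma T2m (x y z u : PBT) :
    (∃ w ∈ rightT x y, u ∈ leftT w z) ↔ ∃ w ∈ leftT y z, u ∈ rightT x w := by
  have := Set.ext_iff.mp (T2 x y z) u
  simpa using this
lemma T3m (x y z u : PBT) :
    (∃ w ∈ addT x y, u ∈ rightT w z) ↔ ∃ w ∈ rightT y z, u ∈ rightT x w := by
  have := Set.ext_iff.mp (T3 x y z) u
  simpa using this

/-- Set-level dendriform axiom 1. -/
lemma leftS_leftS (X Y Z : Set PBT) : leftS (leftS X Y) Z = leftS X (addS Y Z) := by
  ext u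
  simp only [mem_leftS, mem_addS]
  constructor
  · rintro ⟨w, ⟨x, hx, y, hy, hw⟩, z, hz, hu⟩
    obtain ⟨v, hv, hu'⟩ := (T1m x y z u).mp ⟨w, hw, hu⟩
    exact ⟨x, hx, v, ⟨y, hy, z, hz, hv⟩, hu'⟩
  · rintro ⟨x, hx, v, ⟨y, hy, z, hz, hv⟩, hu⟩
    obtain ⟨w, hw, hu'⟩ := (T1m x y z u).mpr ⟨v, hv, hu⟩
    exact ⟨w, ⟨x, hx, y, hy, hw⟩, z, hz, hu'⟩

/-- Set-level dendriform axiom 2. -/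
lemma leftS_rightS (X Y Z : Set PBT) : leftS (rightS X Y) Z = rightS X (leftS Y Z) := by
  ext u
  simp only [mem_leftS, mem_rightS]
  constructor
  · rintro ⟨w, ⟨x, hx, y, hy, hw⟩, z, hz, hu⟩
    obtain ⟨v, hv, hu'⟩ := (T2m x y z u).mp ⟨w, hw, hu⟩
    exact ⟨x, hx, v, ⟨y, hy, z, hz, hv⟩, hu'⟩
  · rintro ⟨x, hx, v, ⟨y, hy, z, hz, hv⟩, hu⟩
    obtain ⟨w, hw, hu'⟩ := (T2m x y z u).mpr ⟨v, hv, hu⟩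
    exact ⟨w, ⟨x, hx, y, hy, hw⟩, z, hz, hu'⟩

/-- Set-level dendriform axiom 3. -/
lemma rightS_addS (X Y Z : Set PBT) : rightS (addS X Y) Z = rightS X (rightS Y Z) := by
  ext u
  simp only [mem_rightS, mem_addS]
  constructor
  · rintro ⟨w, ⟨x, hx, y, hy, hw⟩, z, hz, hu⟩
    obtain ⟨v, hv, hu'⟩ := (T3m x y z u).mp ⟨w, hw, hu⟩
    exact ⟨x, hx, v, ⟨y, hy, z, hz, hv⟩, hu'⟩
  · rintro ⟨x, hx, v, ⟨y, hy, z, hz, hv⟩, hu⟩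
    obtain ⟨w, hw, hu'⟩ := (T3m x y z u).mpr ⟨v, hv, hu⟩
    exact ⟨w, ⟨x, hx, y, hy, hw⟩, z, hz, hu'⟩

@[simp] lemma mulT_leaf (S : Set PBT) : mulT leaf S = {leaf} := rfl
lemma mulT_node (l r : PBT) (S : Set PBT) :
    mulT (node l r) S = rightS (mulT l S) (leftS S (mulT r S)) := rfl

lemma mem_mulT_ne_leaf {a u : PBT} {S : Set PBT} (ha : a ≠ leaf) (h : u ∈ mulT a S) :
    u ≠ leaf := by
  cases a with
  | leaf => exact absurd rfl ha
  | node l r =>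
    rw [mulT_node, mem_rightS] at h
    obtain ⟨x, -, y, -, hu⟩ := h
    exact mem_rightT_ne_leaf hu

lemma mulS_singleton (a : PBT) (S : Set PBT) : mulS {a} S = mulT a S := by
  simp [mulS]

-- reindexing lemmas
lemma mulS_biUnion {α : Type*} (A : Set α) (f : α → Set PBT) (S : Set PBT) :
    mulS (⋃ a ∈ A, f a) S = ⋃ a ∈ A, mulS (f a) S := by
  ext u
  simp only [mem_mulS, Set.mem_iUnion, exists_prop]
  constructor
  · rintro ⟨x, ⟨a, ha, hx⟩, hu⟩
    exact ⟨a, ha, x, hx, hu⟩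
  · rintro ⟨a, ha, x, hx, hu⟩
    exact ⟨x, ⟨a, ha, hx⟩, hu⟩

lemma mulS_union (A B S : Set PBT) : mulS (A ∪ B) S = mulS A S ∪ mulS B S := by
  exact Set.biUnion_union A B fun t => mulT t S

lemma mulS_image {α : Type*} (f : α → PBT) (A : Set α) (S : Set PBT) :
    mulS (f '' A) S = ⋃ a ∈ A, mulT (f a) S := by
  simp [mulS, Set.biUnion_image]

lemma leftS_biUnion_left {α : Type*} (A : Set α) (f : α → Set PBT) (Z : Set PBT) :
    leftS (⋃ a ∈ A, f a) Z = ⋃ a ∈ A, leftS (f a) Z := by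
  ext u
  simp only [mem_leftS, Set.mem_iUnion, exists_prop]
  constructor
  · rintro ⟨x, ⟨a, ha, hx⟩, z, hz, hu⟩
    exact ⟨a, ha, x, hx, z, hz, hu⟩
  · rintro ⟨a, ha, x, hx, z, hz, hu⟩
    exact ⟨x, ⟨a, ha, hx⟩, z, hz, hu⟩

lemma leftS_biUnion_right {α : Type*} (X : Set PBT) (A : Set α) (f : α → Set PBT) :
    leftS X (⋃ a ∈ A, f a) = ⋃ a ∈ A, leftS X (f a) := by
  ext u
  simp only [mem_leftS, Set.mem_iUnion, exists_prop]
  constructor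
  · rintro ⟨x, hx, z, ⟨a, ha, hz⟩, hu⟩
    exact ⟨a, ha, x, hx, z, hz, hu⟩
  · rintro ⟨a, ha, x, hx, z, hz, hu⟩
    exact ⟨x, hx, z, ⟨a, ha, hz⟩, hu⟩

lemma rightS_biUnion_left {α : Type*} (A : Set α) (f : α → Set PBT) (Z : Set PBT) :
    rightS (⋃ a ∈ A, f a) Z = ⋃ a ∈ A, rightS (f a) Z := by
  ext u
  simp only [mem_rightS, Set.mem_iUnion, exists_prop]
  constructor
  · rintro ⟨x, ⟨a, ha, hx⟩, z, hz, hu⟩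
    exact ⟨a, ha, x, hx, z, hz, hu⟩
  · rintro ⟨a, ha, x, hx, z, hz, hu⟩
    exact ⟨x, ⟨a, ha, hx⟩, z, hz, hu⟩

lemma rightS_biUnion_right {α : Type*} (X : Set PBT) (A : Set α) (f : α → Set PBT) :
    rightS X (⋃ a ∈ A, f a) = ⋃ a ∈ A, rightS X (f a) := by
  ext u
  simp only [mem_rightS, Set.mem_iUnion, exists_prop]
  constructor
  · rintro ⟨x, hx, z, ⟨a, ha, hz⟩, hu⟩
    exact ⟨a, ha, x, hx, z, hz, hu⟩
  · rintro ⟨a, ha, x, hx, z, hz, hu⟩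
    exact ⟨x, hx, z, ⟨a, ha, hz⟩, hu⟩

lemma addS_eq_union {U V : Set PBT} (h : ∀ u ∈ U, u ≠ leaf) :
    addS U V = leftS U V ∪ rightS U V := by
  ext w
  simp only [Set.mem_union, mem_addS, mem_leftS, mem_rightS]
  constructor
  · rintro ⟨u, hu, v, hv, hw⟩
    rw [addT_eq_union (Or.inl (h u hu))] at hw
    rcases hw with hw | hw
    · exact Or.inl ⟨u, hu, v, hv, hw⟩
    · exact Or.inr ⟨u, hu, v, hv, hw⟩
  · rintro (⟨u, hu, v, hv, hw⟩ | ⟨u, hu, v, hv, hw⟩) <;>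
      exact ⟨u, hu, v, hv, by rw [addT_eq_union (Or.inl (h u hu))]; simp [hw]⟩


/-- Substitution is a dendriform morphism (pointwise version), by strong
induction on sizes. -/
lemma mulDist : ∀ n : ℕ, ∀ a b : PBT, ∀ S : Set PBT, a.size + b.size ≤ n →
    (mulS (leftT a b) S = leftS (mulT a S) (mulT b S)) ∧
    (mulS (rightT a b) S = rightS (mulT a S) (mulT b S)) ∧
    (mulS (addT a b) S = addS (mulT a S) (mulT b S)) := by
  intro n
  induction n using Nat.strong_induction_on with
  | _ n ih =>
  intro a b S hn
  have HC : ∀ a' b' : PBT, a'.size + b'.size < n →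
      mulS (addT a' b') S = addS (mulT a' S) (mulT b' S) := by
    intro a' b' h
    exact (ih _ h a' b' S le_rfl).2.2
  have hA : mulS (leftT a b) S = leftS (mulT a S) (mulT b S) := by
    cases a with
    | leaf =>
      ext u
      simp [mem_mulS, mem_leftS]
    | node l r =>
      cases b with
      | leaf =>
        rw [leftT_node_leaf, mulS_singleton]
        ext u
        simp only [mem_leftS, mulT_leaf, Set.mem_singleton_iff]
        constructor
        · intro hu
          refine ⟨u, hu, leaf, rfl, ?_⟩
          rw [leftT_leaf_right_of_ne (mem_mulT_ne_leaf (by simp) hu)]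
          rfl
        · rintro ⟨v, hv, y, rfl, hu⟩
          rw [leftT_leaf_right_of_ne (mem_mulT_ne_leaf (by simp) hv)] at hu
          rwa [hu]
      | node l' r' =>
        have hsz : r.size + (node l' r').size < n := by
          simp [size] at hn ⊢; omega
        calc mulS (leftT (node l r) (node l' r')) S
            = ⋃ x ∈ addT r (node l' r'), mulT (node l x) S := by
              rw [leftT_node_node, mulS_image]
          _ = ⋃ x ∈ addT r (node l' r'),
                rightS (mulT l S) (leftS S (mulT x S)) := by
              exact Set.iUnion₂_congr fun x hx => rfl
          _ = rightS (mulT l S) (leftS S (⋃ x ∈ addT r (node l' r'), mulT x S)) := by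
              rw [leftS_biUnion_right, rightS_biUnion_right]
          _ = rightS (mulT l S)
                (leftS S (addS (mulT r S) (mulT (node l' r') S))) := by
              rw [show (⋃ x ∈ addT r (node l' r'), mulT x S) =
                mulS (addT r (node l' r')) S from rfl, HC _ _ hsz]
          _ = leftS (mulT (node l r) S) (mulT (node l' r') S) := by
              rw [mulT_node l r, leftS_rightS, leftS_leftS]
  have hB : mulS (rightT a b) S = rightS (mulT a S) (mulT b S) := by
    cases b with
    | leaf =>
      ext u
      simp [mem_mulS, mem_rightS]
    | node l' r' =>
      cases a with
      | leaf =>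
        rw [rightT_leaf_node, mulS_singleton]
        ext u
        simp only [mem_rightS, mulT_leaf, Set.mem_singleton_iff]
        constructor
        · intro hu
          refine ⟨leaf, rfl, u, hu, ?_⟩
          rw [rightT_leaf_left_of_ne (mem_mulT_ne_leaf (by simp) hu)]
          rfl
        · rintro ⟨x, rfl, v, hv, hu⟩
          rw [rightT_leaf_left_of_ne (mem_mulT_ne_leaf (by simp) hv)] at hu
          rwa [hu]
      | node l r =>
        have hsz : (node l r).size + l'.size < n := by
          simp [size] at hn ⊢; omega
        calc mulS (rightT (node l r) (node l' r')) S
            = ⋃ x ∈ addT (node l r) l', mulT (node x r') S := by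
              rw [rightT_node_node, mulS_image]
          _ = ⋃ x ∈ addT (node l r) l',
                rightS (mulT x S) (leftS S (mulT r' S)) := by
              exact Set.iUnion₂_congr fun x hx => rfl
          _ = rightS (⋃ x ∈ addT (node l r) l', mulT x S)
                (leftS S (mulT r' S)) := by
              rw [rightS_biUnion_left]
          _ = rightS (addS (mulT (node l r) S) (mulT l' S))
                (leftS S (mulT r' S)) := by
              rw [show (⋃ x ∈ addT (node l r) l', mulT x S) =
                mulS (addT (node l r) l') S from rfl, HC _ _ hsz]
          _ = rightS (mulT (node l r) S) (mulT (node l' r') S) := by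
              rw [mulT_node l', rightS_addS]
  refine ⟨hA, hB, ?_⟩
  cases a with
  | leaf =>
    rw [addT_leaf_left, mulS_singleton]
    ext u
    simp only [mem_addS, mulT_leaf, Set.mem_singleton_iff]
    constructor
    · intro hu
      exact ⟨leaf, rfl, u, hu, by rw [addT_leaf_left]; rfl⟩
    · rintro ⟨x, rfl, v, hv, hu⟩
      rw [addT_leaf_left] at hu
      rwa [hu]
  | node l r =>
    cases b with
    | leaf =>
      rw [addT_leaf_right, mulS_singleton]
      ext u
      simp only [mem_addS, mulT_leaf, Set.mem_singleton_iff]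
      constructor
      · intro hu
        exact ⟨u, hu, leaf, rfl, by rw [addT_leaf_right]; rfl⟩
      · rintro ⟨v, hv, y, rfl, hu⟩
        rw [addT_leaf_right] at hu
        rwa [hu]
    | node l' r' =>
      rw [addT_eq_union (Or.inl (by simp)), mulS_union, hA, hB,
        addS_eq_union fun u hu => mem_mulT_ne_leaf (by simp) hu]

lemma mulS_leftT (a b : PBT) (S : Set PBT) :
    mulS (leftT a b) S = leftS (mulT a S) (mulT b S) :=
  (mulDist _ a b S le_rfl).1
lemma mulS_rightT (a b : PBT) (S : Set PBT) :
    mulS (rightT a b) S = rightS (mulT a S) (mulT b S) :=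
  (mulDist _ a b S le_rfl).2.1

/-- Substitution distributes over `⊣` at the level of sets. -/
lemma mulS_leftS (X Y S : Set PBT) :
    mulS (leftS X Y) S = leftS (mulS X S) (mulS Y S) := by
  ext u
  simp only [mem_mulS, mem_leftS]
  constructor
  · rintro ⟨w, ⟨x, hx, y, hy, hw⟩, hu⟩
    have : u ∈ mulS (leftT x y) S := mem_mulS.mpr ⟨w, hw, hu⟩
    rw [mulS_leftT, mem_leftS] at this
    obtain ⟨p, hp, q, hq, hu'⟩ := this
    exact ⟨p, ⟨x, hx, hp⟩, q, ⟨y, hy, hq⟩, hu'⟩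
  · rintro ⟨p, ⟨x, hx, hp⟩, q, ⟨y, hy, hq⟩, hu⟩
    have : u ∈ mulS (leftT x y) S := by
      rw [mulS_leftT, mem_leftS]
      exact ⟨p, hp, q, hq, hu⟩
    rw [mem_mulS] at this
    obtain ⟨w, hw, hu'⟩ := this
    exact ⟨w, ⟨x, hx, y, hy, hw⟩, hu'⟩

/-- Substitution distributes over `⊢` at the level of sets. -/
lemma mulS_rightS (X Y S : Set PBT) :
    mulS (rightS X Y) S = rightS (mulS X S) (mulS Y S) := by
  ext u
  simp only [mem_mulS, mem_rightS]
  constructor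
  · rintro ⟨w, ⟨x, hx, y, hy, hw⟩, hu⟩
    have : u ∈ mulS (rightT x y) S := mem_mulS.mpr ⟨w, hw, hu⟩
    rw [mulS_rightT, mem_rightS] at this
    obtain ⟨p, hp, q, hq, hu'⟩ := this
    exact ⟨p, ⟨x, hx, hp⟩, q, ⟨y, hy, hq⟩, hu'⟩
  · rintro ⟨p, ⟨x, hx, hp⟩, q, ⟨y, hy, hq⟩, hu⟩
    have : u ∈ mulS (rightT x y) S := by
      rw [mulS_rightT, mem_rightS]
      exact ⟨p, hp, q, hq, hu⟩
    rw [mem_mulS] at this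
    obtain ⟨w, hw, hu'⟩ := this
    exact ⟨w, ⟨x, hx, y, hy, hw⟩, hu'⟩

/-- The key associativity identity for a single tree. -/
lemma mulT_mulS_assoc (a : PBT) : ∀ s t : Set PBT,
    mulS (mulT a s) t = mulT a (mulS s t) := by
  induction a with
  | leaf => intro s t; simp [mulS_singleton]
  | node l r ihl ihr =>
    intro s t
    rw [mulT_node, mulS_rightS, mulS_leftS, ihl, ihr, mulT_node]

end PBT

open PBT in
/-- Multiplication of (nonempty finite) sets of nontrivial planar binary trees
is associative. -/
theorem mulS_assoc (r s t : Set PBT)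
    (hr : PBT.Good r) (hs : PBT.Good s) (ht : PBT.Good t) :
    mulS (mulS r s) t = mulS r (mulS s t) := by
  rw [show mulS r s = ⋃ a ∈ r, mulT a s from rfl, mulS_biUnion]
  exact Set.iUnion₂_congr fun a _ => mulT_mulS_assoc a s t
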